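/- arXiv:2512.18349 — 2 statements merged into one kernel-verified Lean document; each statement's English description precedes it below -/
import Mathlib

section
/- Let Γ be a linear order and G = Lex(Γ →₀ ℤ). For all nonzero g, h ∈ G, there exists a natural number n with |g| ≤ n • |h| and |h| ≤ n • |g| if and only if the least element of the support of g equals the least element of the support of h. (Thus the archimedean classes of G are in canonical bijection with Γ, i.e., the archimedean spine of G is Γ.) -/
/-!
The archimedean class of `a ∈ Lex (Γ →₀ N)` is determined by the least index `i` of its support,
because lexicographic comparison with `|a|` is decided at `i`. If the support of `b` starts later,
every multiple of `|b|` vanishes at `i`, where `|a|` is positive, so it stays below `|a|`. If both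
supports start at `i`, the coefficients of `|a|` and `|b|` at `i` are positive, and since `N` is
archimedean a multiple of one exceeds the other.
-/

namespace Finsupp

variable {Γ N : Type*}

theorem Lex.ofLex_nsmul_apply [AddMonoid N] (n : ℕ) (x : Lex (Γ →₀ N)) (i : Γ) :
    ofLex (n • x) i = n • ofLex x i :=
  rfl

variable [LinearOrder Γ]

theorem apply_eq_zero_of_lt_support_min [Zero N] {f : Γ →₀ N} {j : Γ}
    (hj : (j : WithTop Γ) < f.support.min) : f j = 0 :=
  notMem_support_iff.mp fun hmem ↦ (Finset.min_le hmem).not_gt hj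

namespace Lex

theorem lt_of_le_support_min [Zero N] [LT N] {x y : Lex (Γ →₀ N)} {i : Γ}
    (hx : ↑i ≤ (ofLex x).support.min) (hy : ↑i ≤ (ofLex y).support.min)
    (hi : ofLex x i < ofLex y i) : x < y :=
  Lex.lt_iff.mpr ⟨i, fun _ hj ↦
    (apply_eq_zero_of_lt_support_min ((WithTop.coe_lt_coe.mpr hj).trans_le hx)).trans
      (apply_eq_zero_of_lt_support_min ((WithTop.coe_lt_coe.mpr hj).trans_le hy)).symm, hi⟩

theorem support_min_le_support_min_nsmul [AddMonoid N] (n : ℕ) (x : Lex (Γ →₀ N)) :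
    (ofLex x).support.min ≤ (ofLex (n • x)).support.min :=
  Finset.min_mono support_smul

theorem apply_pos_of_support_min_eq [Zero N] [LinearOrder N] {x : Lex (Γ →₀ N)} {i : Γ}
    (hx : 0 ≤ x) (hi : (ofLex x).support.min = i) : 0 < ofLex x i := by
  refine lt_of_le_of_ne (not_lt.mp fun hneg ↦ hx.not_gt ?_)
    (mem_support_iff.mp (Finset.mem_of_min hi)).symm
  exact lt_of_le_support_min hi.ge (by simp) hneg

theorem support_abs [AddCommGroup N] [LinearOrder N] (a : Lex (Γ →₀ N)) :
    (ofLex |a|).support = (ofLex a).support := by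
  rcases abs_choice a with h | h <;> rw [h]
  exact support_neg _

variable [AddCommGroup N] [LinearOrder N] [IsOrderedAddMonoid N]

theorem abs_apply_pos_of_support_min_eq {a : Lex (Γ →₀ N)} {i : Γ}
    (hi : (ofLex a).support.min = i) : 0 < ofLex |a| i :=
  apply_pos_of_support_min_eq (abs_nonneg a) (by rwa [support_abs])

theorem nsmul_abs_lt_abs_of_support_min_lt {a b : Lex (Γ →₀ N)}
    (h : (ofLex a).support.min < (ofLex b).support.min) (n : ℕ) : n • |b| < |a| := by
  obtain ⟨i, hi⟩ := WithTop.ne_top_iff_exists.mp h.ne_top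
  have hib : (i : WithTop Γ) < (ofLex |b|).support.min := by rwa [support_abs, hi]
  refine lt_of_le_support_min ((hib.trans_le (support_min_le_support_min_nsmul n _)).le)
    (by rw [support_abs, hi]) ?_
  rw [ofLex_nsmul_apply, apply_eq_zero_of_lt_support_min hib, smul_zero]
  exact abs_apply_pos_of_support_min_eq hi.symm

theorem exists_abs_le_nsmul_abs_of_support_min_eq [Archimedean N] {a b : Lex (Γ →₀ N)}
    (h : (ofLex a).support.min = (ofLex b).support.min) : ∃ n : ℕ, |b| ≤ n • |a| := by
  rcases eq_or_ne (ofLex a).support.min ⊤ with htop | hne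
  · have hb : b = 0 := by
      simpa [htop, eq_comm (a := ⊤), Finset.min_eq_top] using h
    exact ⟨0, by simp [hb]⟩
  · obtain ⟨i, hi⟩ := WithTop.ne_top_iff_exists.mp hne
    obtain ⟨n, hn⟩ := exists_lt_nsmul (abs_apply_pos_of_support_min_eq hi.symm) (ofLex |b| i)
    refine ⟨n, (lt_of_le_support_min (by rw [support_abs, ← h, hi])
      ((support_min_le_support_min_nsmul n _).trans' (by rw [support_abs, hi])) ?_).le⟩
    rwa [ofLex_nsmul_apply]

theorem archimedeanClassMk_le_archimedeanClassMk_iff [Archimedean N] {a b : Lex (Γ →₀ N)} :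
    ArchimedeanClass.mk a ≤ ArchimedeanClass.mk b ↔
      (ofLex a).support.min ≤ (ofLex b).support.min := by
  rw [ArchimedeanClass.mk_le_mk]
  constructor
  · rintro ⟨n, hn⟩
    exact not_lt.mp fun hlt ↦ (nsmul_abs_lt_abs_of_support_min_lt hlt n).not_ge hn
  · intro hle
    rcases hle.lt_or_eq with hlt | heq
    · exact ⟨1, by simpa using (nsmul_abs_lt_abs_of_support_min_lt hlt 1).le⟩
    · exact exists_abs_le_nsmul_abs_of_support_min_eq heq

theorem archimedeanClassMk_eq_archimedeanClassMk_iff [Archimedean N] {a b : Lex (Γ →₀ N)} :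
    ArchimedeanClass.mk a = ArchimedeanClass.mk b ↔
      (ofLex a).support.min = (ofLex b).support.min := by
  simp only [le_antisymm_iff, archimedeanClassMk_le_archimedeanClassMk_iff]

end Lex

end Finsupp

theorem stmt_1_general {Γ : Type*} [LinearOrder Γ] (g h : Lex (Γ →₀ ℤ)) :
    (∃ n : ℕ, |g| ≤ n • |h| ∧ |h| ≤ n • |g|) ↔
      (ofLex g).support.min = (ofLex h).support.min := by
  rw [← Finsupp.Lex.archimedeanClassMk_eq_archimedeanClassMk_iff, ArchimedeanClass.mk_eq_mk]
  constructor
  · rintro ⟨n, hgh, hhg⟩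
    exact ⟨⟨n, hhg⟩, ⟨n, hgh⟩⟩
  · rintro ⟨⟨m, hm⟩, ⟨n, hn⟩⟩
    exact ⟨max m n, hn.trans (nsmul_le_nsmul_left (abs_nonneg h) (le_max_right m n)),
      hm.trans (nsmul_le_nsmul_left (abs_nonneg g) (le_max_left m n))⟩

/-- Let `Γ` be a linear order and `G = Lex (Γ →₀ ℤ)`. For all nonzero `g, h ∈ G`, there is
`n : ℕ` with `|g| ≤ n • |h|` and `|h| ≤ n • |g|` (archimedean equivalence) if and only if the
least element of the support of `g` equals the least element of the support of `h`. -/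
theorem stmt_1 {Γ : Type*} [LinearOrder Γ] (g h : Lex (Γ →₀ ℤ)) (hg : g ≠ 0) (hh : h ≠ 0) :
    (∃ n : ℕ, |g| ≤ n • |h| ∧ |h| ≤ n • |g|) ↔
      (ofLex g).support.min = (ofLex h).support.min :=
  stmt_1_general g h
end

section
/- Let Γ be a linear order, n ≥ 2 an integer, and G = Lex(Γ →₀ ℤ). Then the family {A(g) | g ∈ G, g ≠ 0} of largest convex subgroups avoiding a nonzero element coincides with the family {F_n(g) | g ∈ G, g ∉ nG} of n-fundaments, and both coincide with the family {H_{>i} | i ∈ Γ}, where H_{>i} = {h ∈ G | support h ⊆ {j ∈ Γ | i < j}}. Moreover the map i ↦ H_{>i} is an order-reversing bijection from Γ onto this family ordered by inclusion: i < j if and only if H_{>j} ⊊ H_{>i}. -/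
/-- A convex subgroup of `G = Lex (Γ →₀ ℤ)`, as a subset: it contains `0`, is closed under
addition and negation, and whenever `g ∈ H` and `|h| ≤ |g|` then `h ∈ H`. -/
def IsConvexSubgroup {Γ : Type*} [LinearOrder Γ] (H : Set (Lex (Γ →₀ ℤ))) : Prop :=
  (0 : Lex (Γ →₀ ℤ)) ∈ H ∧ (∀ a ∈ H, ∀ b ∈ H, a + b ∈ H) ∧ (∀ a ∈ H, -a ∈ H) ∧
    ∀ g ∈ H, ∀ h : Lex (Γ →₀ ℤ), |h| ≤ |g| → h ∈ H

/-- `H` is `A(g)` for some nonzero `g`: the largest convex subgroup of `G` not containing `g`. -/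
def IsLargestAvoiding {Γ : Type*} [LinearOrder Γ] (H : Set (Lex (Γ →₀ ℤ))) : Prop :=
  ∃ g : Lex (Γ →₀ ℤ), g ≠ 0 ∧ IsConvexSubgroup H ∧ g ∉ H ∧
    ∀ H' : Set (Lex (Γ →₀ ℤ)), IsConvexSubgroup H' → g ∉ H' → H' ⊆ H

/-- `H` is `F_n(g)` for some `g ∉ nG`: the largest convex subgroup of `G` disjoint from the
coset `g + nG`. -/
def IsFundament {Γ : Type*} [LinearOrder Γ] (n : ℕ) (H : Set (Lex (Γ →₀ ℤ))) : Prop :=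
  ∃ g : Lex (Γ →₀ ℤ), (¬ ∃ x : Lex (Γ →₀ ℤ), g = n • x) ∧ IsConvexSubgroup H ∧
    (∀ x ∈ H, ¬ ∃ y : Lex (Γ →₀ ℤ), x = g + n • y) ∧
    ∀ H' : Set (Lex (Γ →₀ ℤ)), IsConvexSubgroup H' →
      (∀ x ∈ H', ¬ ∃ y : Lex (Γ →₀ ℤ), x = g + n • y) → H' ⊆ H

/-- `H_{>i} = {h ∈ G | support h ⊆ {j | i < j}}`. -/
def Hgt {Γ : Type*} [LinearOrder Γ] (i : Γ) : Set (Lex (Γ →₀ ℤ)) :=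
  {h | ↑(ofLex h).support ⊆ {j : Γ | i < j}}

/-!
Write `e_i = single i 1`. If a convex subgroup `H` contains some `h` with a nonzero coordinate at
or below `i`, then `e_i < 2|h|`, so `e_i ∈ H`; and every `g` vanishing below `i` satisfies
`|g| < m e_i` for `m = |g i| + 1`, so `g ∈ H`. Hence `H_{>i}` is the largest convex subgroup
disjoint from any set `S` that it avoids and that contains an element vanishing below `i`.
For `A(g)` take `S = {g}` and `i` the least index of the support of `g`; for `F_n(g)` take
`S = g + nG` and `i` the least index with `n ∤ g i`: the coordinatewise remainder of `g` mod `n`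
lies in `S` and vanishes below `i`, while no element of `S` vanishes at `i`.
-/

open Finsupp

section

variable {Γ : Type*}

@[simp]
lemma ofLex_nsmul_apply (m : ℕ) (x : Lex (Γ →₀ ℤ)) (j : Γ) :
    ofLex (m • x) j = m * ofLex x j :=
  rfl

lemma ofLex_add_nsmul_apply_emod (n : ℕ) (g y : Lex (Γ →₀ ℤ)) (k : Γ) :
    ofLex (g + n • y) k % n = ofLex g k % n := by
  simp [Int.add_mul_emod_self_left]

lemma not_exists_eq_nsmul_of_emod_ne_zero {n : ℕ} {g : Lex (Γ →₀ ℤ)} {i : Γ}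
    (hi : ofLex g i % n ≠ 0) : ¬∃ x : Lex (Γ →₀ ℤ), g = n • x := by
  rintro ⟨x, rfl⟩
  exact hi (by simp)

lemma exists_sub_nsmul_apply_eq_emod (n : ℕ) (g : Lex (Γ →₀ ℤ)) :
    ∃ q : Lex (Γ →₀ ℤ), ∀ k, ofLex (g - n • q) k = ofLex g k % n :=
  ⟨toLex ((ofLex g).mapRange (· / (n : ℤ)) (Int.zero_ediv _)), fun k => by
    simp [Int.emod_def]⟩

variable [LinearOrder Γ]

lemma abs_ofLex_abs_apply (x : Lex (Γ →₀ ℤ)) (j : Γ) : |ofLex |x| j| = |ofLex x j| := by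
  rcases abs_choice x with h | h <;> simp [h]

lemma ofLex_abs_apply_eq_zero {x : Lex (Γ →₀ ℤ)} {j : Γ} :
    ofLex |x| j = 0 ↔ ofLex x j = 0 := by
  rw [← abs_eq_zero, abs_ofLex_abs_apply, abs_eq_zero]

lemma exists_forall_lt_eq_zero_and_pos_abs {x : Lex (Γ →₀ ℤ)} (hx : x ≠ 0) :
    ∃ w, (∀ k < w, ofLex x k = 0) ∧ 0 < ofLex |x| w := by
  obtain ⟨w, hbelow, hw⟩ := Finsupp.Lex.lt_iff.mp (abs_pos.mpr hx)
  exact ⟨w, fun k hk => ofLex_abs_apply_eq_zero.mp (hbelow k hk).symm, hw⟩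

lemma exists_forall_lt_eq_zero_and_ne_zero {x : Lex (Γ →₀ ℤ)} (hx : x ≠ 0) :
    ∃ i, (∀ k < i, ofLex x k = 0) ∧ ofLex x i ≠ 0 := by
  obtain ⟨i, hbelow, hi⟩ := exists_forall_lt_eq_zero_and_pos_abs hx
  exact ⟨i, hbelow, fun h => hi.ne' (ofLex_abs_apply_eq_zero.mpr h)⟩

lemma toLex_single_pos (i : Γ) : 0 < toLex (single i (1 : ℤ)) :=
  Finsupp.Lex.lt_iff.mpr ⟨i, fun k hk => by simp [hk.ne], by simp⟩

lemma ofLex_toLex_single_of_lt {i k : Γ} (hk : k < i) : ofLex (toLex (single i (1 : ℤ))) k = 0 :=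
  single_eq_of_ne' hk.ne'

lemma mem_Hgt {i : Γ} {h : Lex (Γ →₀ ℤ)} : h ∈ Hgt i ↔ ∀ j ≤ i, ofLex h j = 0 := by
  simp only [Hgt, Set.mem_ofPred_eq, Set.subset_def, Finset.mem_coe, Finsupp.mem_support_iff]
  exact forall_congr' fun j => by rw [← not_le, not_imp_not]

lemma toLex_single_notMem_Hgt (i : Γ) : toLex (single i (1 : ℤ)) ∉ Hgt i := fun h => by
  simpa using mem_Hgt.mp h i le_rfl

lemma single_lt_two_nsmul_abs {i : Γ} {h : Lex (Γ →₀ ℤ)} (hh : h ∉ Hgt i) :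
    toLex (single i 1) < (2 : ℕ) • |h| := by
  have h0 : h ≠ 0 := by rintro rfl; exact hh (mem_Hgt.mpr fun _ _ => rfl)
  obtain ⟨w, hbelow, hw⟩ := exists_forall_lt_eq_zero_and_pos_abs h0
  have hwi : w ≤ i := by
    by_contra! hiw
    exact hh (mem_Hgt.mpr fun j hj => hbelow j (hj.trans_lt hiw))
  refine Finsupp.Lex.lt_iff.mpr ⟨w, fun k hk => ?_, ?_⟩
  · simp [(hk.trans_le hwi).ne, ofLex_abs_apply_eq_zero.mpr (hbelow k hk)]
  · have : single i (1 : ℤ) w ≤ 1 := by rw [single_apply]; split_ifs <;> simp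
    simp only [ofLex_toLex, ofLex_nsmul_apply]
    omega

lemma abs_lt_nsmul_single {i : Γ} {g : Lex (Γ →₀ ℤ)} (hg : ∀ k < i, ofLex g k = 0) :
    |g| < ((ofLex g i).natAbs + 1) • toLex (single i 1) := by
  refine Finsupp.Lex.lt_iff.mpr ⟨i, fun k hk => ?_, ?_⟩
  · simp [hk.ne, ofLex_abs_apply_eq_zero.mpr (hg k hk)]
  · have hle := le_abs_self (ofLex |g| i)
    rw [abs_ofLex_abs_apply, Int.abs_eq_natAbs] at hle
    simp only [ofLex_nsmul_apply, ofLex_toLex, single_eq_same]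
    omega

lemma IsConvexSubgroup.nsmul_mem {H : Set (Lex (Γ →₀ ℤ))} (hH : IsConvexSubgroup H)
    {x : Lex (Γ →₀ ℤ)} (hx : x ∈ H) (m : ℕ) : m • x ∈ H := by
  induction m with
  | zero => simpa using hH.1
  | succ m ih => simpa [succ_nsmul] using hH.2.1 _ ih _ hx

lemma IsConvexSubgroup.mem_of_forall_lt_eq_zero {H : Set (Lex (Γ →₀ ℤ))}
    (hH : IsConvexSubgroup H) {i : Γ} {h : Lex (Γ →₀ ℤ)} (hh : h ∈ H) (hhi : h ∉ Hgt i)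
    {g : Lex (Γ →₀ ℤ)} (hg : ∀ k < i, ofLex g k = 0) : g ∈ H := by
  have hsingle : toLex (single i 1) ∈ H := by
    refine hH.2.2.2 _ (hH.nsmul_mem hh 2) _ ?_
    rw [abs_of_pos (toLex_single_pos i), abs_nsmul]
    exact (single_lt_two_nsmul_abs hhi).le
  refine hH.2.2.2 _ (hH.nsmul_mem hsingle ((ofLex g i).natAbs + 1)) _ ?_
  rw [abs_nsmul, abs_of_pos (toLex_single_pos i)]
  exact (abs_lt_nsmul_single hg).le

lemma IsConvexSubgroup.subset_Hgt {H : Set (Lex (Γ →₀ ℤ))} (hH : IsConvexSubgroup H)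
    {i : Γ} {s : Lex (Γ →₀ ℤ)} (hs : ∀ k < i, ofLex s k = 0) (hsH : s ∉ H) : H ⊆ Hgt i :=
  fun _ hh => by_contra fun hhi => hsH (hH.mem_of_forall_lt_eq_zero hh hhi hs)

lemma isConvexSubgroup_Hgt (i : Γ) : IsConvexSubgroup (Hgt i) := by
  refine ⟨mem_Hgt.mpr fun _ _ => rfl, fun a ha b hb => ?_, fun a ha => ?_, fun g hg h hhg => ?_⟩
  · rw [mem_Hgt] at *
    intro j hj
    simp [ha j hj, hb j hj]
  · rw [mem_Hgt] at *
    intro j hj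
    simp [ha j hj]
  · by_contra hh
    have hg2 : ∀ k ≤ i, ofLex ((2 : ℕ) • g) k = 0 := fun k hk => by simp [mem_Hgt.mp hg k hk]
    have h2g : |(2 : ℕ) • g| < toLex (single i 1) := by
      simpa [hg2 i le_rfl] using abs_lt_nsmul_single fun k hk => hg2 k hk.le
    exact lt_irrefl _ <| calc
      toLex (single i 1) < (2 : ℕ) • |h| := single_lt_two_nsmul_abs hh
      _ ≤ (2 : ℕ) • |g| := nsmul_le_nsmul_right hhg 2
      _ = |(2 : ℕ) • g| := (abs_nsmul _ _).symm
      _ < toLex (single i 1) := h2g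

lemma isGreatest_Hgt {S : Set (Lex (Γ →₀ ℤ))} {i : Γ} (hS : Disjoint (Hgt i) S)
    {s : Lex (Γ →₀ ℤ)} (hsS : s ∈ S) (hs : ∀ k < i, ofLex s k = 0) :
    IsGreatest {H | IsConvexSubgroup H ∧ Disjoint H S} (Hgt i) :=
  ⟨⟨isConvexSubgroup_Hgt i, hS⟩,
    fun _ ⟨hH, hHS⟩ => hH.subset_Hgt hs (Set.disjoint_right.mp hHS hsS)⟩

lemma strictAnti_Hgt : StrictAnti (Hgt (Γ := Γ)) := by
  intro i j hij
  refine Set.ssubset_iff_subset_ne.mpr ⟨fun h hh => mem_Hgt.mpr fun k hk =>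
    mem_Hgt.mp hh k (hk.trans hij.le), fun heq => toLex_single_notMem_Hgt j ?_⟩
  exact heq ▸ mem_Hgt.mpr fun k hk => ofLex_toLex_single_of_lt (hk.trans_lt hij)

lemma isLargestAvoiding_iff_exists_isGreatest {H : Set (Lex (Γ →₀ ℤ))} :
    IsLargestAvoiding H ↔
      ∃ g, g ≠ 0 ∧ IsGreatest {H' | IsConvexSubgroup H' ∧ Disjoint H' {g}} H := by
  simp only [IsLargestAvoiding, IsGreatest, upperBounds, Set.disjoint_singleton_right,
    Set.mem_ofPred_eq, and_imp, and_assoc]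

lemma isLargestAvoiding_iff {H : Set (Lex (Γ →₀ ℤ))} :
    IsLargestAvoiding H ↔ H ∈ Set.range Hgt := by
  rw [isLargestAvoiding_iff_exists_isGreatest]
  constructor
  · rintro ⟨g, hg, hH⟩
    obtain ⟨i, hbelow, hi⟩ := exists_forall_lt_eq_zero_and_ne_zero hg
    have hgi : g ∉ Hgt i := fun h => hi (mem_Hgt.mp h i le_rfl)
    exact ⟨i, (isGreatest_Hgt (Set.disjoint_singleton_right.mpr hgi) rfl hbelow).unique hH⟩
  · rintro ⟨i, rfl⟩
    exact ⟨_, (toLex_single_pos i).ne', isGreatest_Hgt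
      (Set.disjoint_singleton_right.mpr (toLex_single_notMem_Hgt i)) rfl
      fun _ => ofLex_toLex_single_of_lt⟩

lemma disjoint_Hgt_of_emod_ne_zero {n : ℕ} {g : Lex (Γ →₀ ℤ)} {i : Γ}
    (hi : ofLex g i % n ≠ 0) : Disjoint (Hgt i) {x | ∃ y : Lex (Γ →₀ ℤ), x = g + n • y} := by
  refine Set.disjoint_left.mpr fun x hx ⟨y, hxy⟩ => hi ?_
  rw [← ofLex_add_nsmul_apply_emod n g y, ← hxy, mem_Hgt.mp hx i le_rfl, Int.zero_emod]

lemma isFundament_iff_exists_isGreatest {n : ℕ} {H : Set (Lex (Γ →₀ ℤ))} :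
    IsFundament n H ↔ ∃ g : Lex (Γ →₀ ℤ), (¬∃ x : Lex (Γ →₀ ℤ), g = n • x) ∧
      IsGreatest {H' | IsConvexSubgroup H' ∧
        Disjoint H' {x | ∃ y : Lex (Γ →₀ ℤ), x = g + n • y}} H := by
  simp only [IsFundament, IsGreatest, upperBounds, Set.disjoint_left, Set.mem_ofPred_eq,
    and_imp, and_assoc]

lemma isFundament_iff {n : ℕ} (hn : 2 ≤ n) {H : Set (Lex (Γ →₀ ℤ))} :
    IsFundament n H ↔ H ∈ Set.range Hgt := by
  rw [isFundament_iff_exists_isGreatest]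
  constructor
  · rintro ⟨g, hg, hH⟩
    obtain ⟨q, hq⟩ := exists_sub_nsmul_apply_eq_emod n g
    have hr : g - n • q ≠ 0 := fun h => hg ⟨q, sub_eq_zero.mp h⟩
    obtain ⟨i, hbelow, hi⟩ := exists_forall_lt_eq_zero_and_ne_zero hr
    rw [hq] at hi
    refine ⟨i, (isGreatest_Hgt (disjoint_Hgt_of_emod_ne_zero hi) ⟨-q, ?_⟩ hbelow).unique hH⟩
    rw [sub_eq_add_neg, neg_nsmul]
  · rintro ⟨i, rfl⟩
    have hi : ofLex (toLex (single i (1 : ℤ))) i % n ≠ 0 := by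
      rw [ofLex_toLex, single_eq_same, Int.emod_eq_of_lt zero_le_one (by omega)]
      exact one_ne_zero
    exact ⟨_, not_exists_eq_nsmul_of_emod_ne_zero hi, isGreatest_Hgt
      (disjoint_Hgt_of_emod_ne_zero hi) ⟨0, by simp⟩ fun _ => ofLex_toLex_single_of_lt⟩

end

/-- For `n ≥ 2` and `G = Lex (Γ →₀ ℤ)`, the family `{A(g) | g ≠ 0}` coincides with the family
`{F_n(g) | g ∉ nG}`, both coincide with `{H_{>i} | i ∈ Γ}`, and `i ↦ H_{>i}` is an
order-reversing bijection from `Γ` onto this family ordered by inclusion. -/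
theorem stmt_4 {Γ : Type*} [LinearOrder Γ] (n : ℕ) (hn : 2 ≤ n) :
    {H : Set (Lex (Γ →₀ ℤ)) | IsLargestAvoiding H} =
      {H : Set (Lex (Γ →₀ ℤ)) | IsFundament n H} ∧
    {H : Set (Lex (Γ →₀ ℤ)) | IsLargestAvoiding H} = Set.range (Hgt (Γ := Γ)) ∧
    ∀ i j : Γ, i < j ↔ Hgt j ⊂ Hgt i := by
  have hA : {H : Set (Lex (Γ →₀ ℤ)) | IsLargestAvoiding H} = Set.range Hgt :=
    Set.ext fun _ => isLargestAvoiding_iff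
  have hF : {H : Set (Lex (Γ →₀ ℤ)) | IsFundament n H} = Set.range Hgt :=
    Set.ext fun _ => isFundament_iff hn
  exact ⟨hA.trans hF.symm, hA, fun i j => strictAnti_Hgt.lt_iff_gt.symm⟩
end
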